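/- For any subset S ⊆ {0,1,…,6}, conjugating the Levin–Gu plaquette operator by the partial spin-flip on S gives (∏_{j∈S} X_j) · B · (∏_{j∈S} X_j) = B · ∏_{k∈E_S} exp(iπ·Z_kZ_{k+1}/2), where E_S := { k ∈ {1,…,6} : exactly one of k, k+1 (indices mod 6 in {1,…,6}) lies in S }. In particular, a spin-flip restricted to one side of a cut through the hexagon decorates B by the product of the operators i^{Z_kZ_{k+1}} = exp(iπZ_kZ_{k+1}/2) over the boundary edges of the flipped region. -/

import Mathlib

open Complex Matrix

noncomputable section

/-- The operator acting as the 2×2 matrix `M` on the qubit at site `j` of a finite qubit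
system and as the identity on all other sites. -/
def localOp {S : Type*} [Fintype S] [DecidableEq S] (j : S)
    (M : Matrix (Fin 2) (Fin 2) ℂ) :
    Matrix (S → Fin 2) (S → Fin 2) ℂ :=
  Matrix.of fun f g => if ∀ k, k ≠ j → f k = g k then M (f j) (g j) else 0

/-- The Pauli `X` matrix. -/
def PX : Matrix (Fin 2) (Fin 2) ℂ := !![0, 1; 1, 0]

/-- The Pauli `Z` matrix. -/
def PZ : Matrix (Fin 2) (Fin 2) ℂ := !![1, 0; 0, -1]

/-- Operators on the seven qubits of a hexagon of the triangular lattice: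
qubit `0` is the center and qubits `1,…,6` are its neighbors in cyclic order. -/
abbrev HexOp := Matrix (Fin 7 → Fin 2) (Fin 7 → Fin 2) ℂ

/-- Pauli `X` on qubit `j`. -/
def Xh (j : Fin 7) : HexOp := localOp j PX

/-- Pauli `Z` on qubit `j`. -/
def Zh (j : Fin 7) : HexOp := localOp j PZ

/-- The `k`-th neighboring qubit, `k = 1,…,6`. -/
def nb (k : Fin 6) : Fin 7 := ⟨k.val + 1, by omega⟩

/-- The cyclic successor of the `k`-th neighboring qubit (indices mod 6, `7 ↦ 1`). -/
def nb' (k : Fin 6) : Fin 7 := ⟨(k.val + 1) % 6 + 1, by omega⟩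

/-- `i^M := exp (I π M / 2)` for a (self-adjoint) operator `M`. -/
def iPow (M : HexOp) : HexOp :=
  NormedSpace.exp (((Real.pi : ℂ) * Complex.I / 2) • M)

/-- The Levin–Gu plaquette operator
`B := −X₀·∏_{k=1}^{6} i^{(1 − Z_k Z_{k+1})/2}`. -/
def LGB : HexOp :=
  -(Xh 0 * ((List.finRange 6).map fun k =>
      iPow (((2 : ℂ)⁻¹) • ((1 : HexOp) - Zh (nb k) * Zh (nb' k)))).prod)

/-- The partial spin-flip `∏_{j∈S} X_j` on a subset `S` of the seven qubits. -/
def partialFlip (S : Finset (Fin 7)) : HexOp :=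
  (((List.finRange 7).filter (fun j => j ∈ S)).map Xh).prod

/-- The edges `k ∈ {1,…,6}` of the hexagon boundary having exactly one endpoint in `S`
(the boundary edges of the flipped region). -/
def bdryEdges (S : Finset (Fin 7)) : List (Fin 6) :=
  (List.finRange 6).filter fun k =>
    (nb k ∈ S ∧ nb' k ∉ S) ∨ (nb' k ∈ S ∧ nb k ∉ S)

/-!
In the computational basis every `Z_j` is diagonal and a product of `X_j`'s is the permutation
matrix of a translation `f ↦ f + v` of spin configurations, so `B = -X₀ D` with `D` diagonal.
Conjugating by the partial flip `P` fixes `X₀` (translations commute and `P² = 1`) and replaces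
`D(f)` by `D(f + v)`. Each edge factor `i^{(1 - s_k s_{k+1})/2}` depends only on the product
`s_k s_{k+1}`, which changes sign exactly on the boundary edges, and there
`i^{(1 + s)/2} = i^{(1 - s)/2} · i^{s}`.
-/

open Real

lemma PX_apply (a b : Fin 2) : PX a b = if a + 1 = b then 1 else 0 := by
  fin_cases a <;> fin_cases b <;> simp [PX]

def spin : Fin 2 → ℂ := ![1, -1]

lemma PZ_eq_diagonal : PZ = diagonal spin := by
  ext a b
  fin_cases a <;> fin_cases b <;> simp [PZ, spin]

lemma spin_add_one (a : Fin 2) : spin (a + 1) = -spin a := by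
  fin_cases a <;> simp [spin]

section FlipMatrix

variable {ι : Type*} [Fintype ι] [DecidableEq ι]

/-- The product of the Pauli `X`'s on the sites where `v = 1`, i.e. the permutation matrix of
the translation `f ↦ f + v` of basis configurations. -/
abbrev flipMatrix (v : ι → Fin 2) : Matrix (ι → Fin 2) (ι → Fin 2) ℂ :=
  (Equiv.addRight v).toPEquiv.toMatrix

lemma flipMatrix_add (v w : ι → Fin 2) : flipMatrix (v + w) = flipMatrix v * flipMatrix w := by
  rw [← PEquiv.toMatrix_trans, ← Equiv.toPEquiv_trans]
  ext f : 1
  simp [add_assoc]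

lemma flipMatrix_commute (v w : ι → Fin 2) : Commute (flipMatrix v) (flipMatrix w) := by
  rw [Commute, SemiconjBy, ← flipMatrix_add, ← flipMatrix_add, add_comm]

lemma flipMatrix_mul_diagonal_mul_flipMatrix (v : ι → Fin 2) (d : (ι → Fin 2) → ℂ) :
    flipMatrix v * diagonal d * flipMatrix v = diagonal fun f => d (f + v) := by
  have hsymm : (Equiv.addRight v).symm = Equiv.addRight v := by
    have hneg : -v = v := funext fun i => (by decide : ∀ b : Fin 2, -b = b) (v i)
    rw [Equiv.addRight_symm, hneg]
  rw [PEquiv.toMatrix_toPEquiv_mul, PEquiv.mul_toMatrix_toPEquiv, submatrix_submatrix, hsymm]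
  exact submatrix_diagonal_equiv d (Equiv.addRight v)

lemma flipMatrix_mul_flipMatrix_mul_diagonal_mul_flipMatrix (v w : ι → Fin 2)
    (d : (ι → Fin 2) → ℂ) :
    flipMatrix v * (flipMatrix w * diagonal d) * flipMatrix v =
      flipMatrix w * diagonal fun f => d (f + v) := by
  rw [← mul_assoc, (flipMatrix_commute v w).eq, mul_assoc, mul_assoc, ← mul_assoc (flipMatrix v),
    flipMatrix_mul_diagonal_mul_flipMatrix]

lemma prod_map_diagonal {α : Type*} (L : List α) (d : α → (ι → Fin 2) → ℂ) :
    (L.map fun k => diagonal (d k)).prod = diagonal fun f => (L.map fun k => d k f).prod := by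
  induction L with
  | nil => simp
  | cons a L ih => simp only [List.map_cons, List.prod_cons, ih, diagonal_mul_diagonal]

lemma localOp_PX (j : ι) : localOp j PX = flipMatrix (Pi.single j 1) := by
  ext f g
  have hflip : f + Pi.single j 1 = g ↔ (∀ k, k ≠ j → f k = g k) ∧ f j + 1 = g j := by
    refine ⟨fun h => ⟨fun k hk => ?_, by simp [← h]⟩, fun ⟨hne, hj⟩ => funext fun k => ?_⟩
    · simp [← h, hk]
    · by_cases hk : k = j
      · simp [hk, hj]
      · simp [hk, hne k hk]
  simp only [localOp, of_apply, PEquiv.toMatrix_apply, Equiv.toPEquiv_apply, Option.mem_def,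
    Option.some.injEq, Equiv.coe_addRight, hflip]
  rw [ite_and, PX_apply]

lemma localOp_diagonal (j : ι) (d : Fin 2 → ℂ) :
    localOp j (diagonal d) = diagonal fun f => d (f j) := by
  ext f g
  have hfg : f = g ↔ (∀ k, k ≠ j → f k = g k) ∧ f j = g j :=
    ⟨fun h => ⟨fun _ _ => h ▸ rfl, h ▸ rfl⟩, fun ⟨hne, hj⟩ => funext fun k =>
      if hk : k = j then hk ▸ hj else hne k hk⟩
  simp only [localOp, of_apply, diagonal_apply, hfg, ite_and]

lemma prod_map_localOp_PX (L : List ι) :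
    (L.map fun j => localOp j PX).prod = flipMatrix (L.map fun j => Pi.single j 1).sum := by
  induction L with
  | nil => simp [flipMatrix]
  | cons a L ih =>
    rw [List.map_cons, List.prod_cons, ih, localOp_PX, List.map_cons, List.sum_cons, flipMatrix_add]

end FlipMatrix

lemma spin_add_sum_single {ι : Type*} [DecidableEq ι] (S : Finset ι) (f : ι → Fin 2) (j : ι) :
    spin ((f + ∑ i ∈ S, Pi.single i 1 : ι → Fin 2) j) =
      if j ∈ S then -spin (f j) else spin (f j) := by
  rw [Pi.add_apply, Finset.sum_apply]
  by_cases h : j ∈ S <;> simp [Pi.single_apply, h, spin_add_one]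

def edgeSpin (k : Fin 6) (f : Fin 7 → Fin 2) : ℂ := spin (f (nb k)) * spin (f (nb' k))

def plaquettePhase (f : Fin 7 → Fin 2) : ℂ :=
  ((List.finRange 6).map fun k => cexp ((π : ℂ) * I / 2 * (2⁻¹ * (1 - edgeSpin k f)))).prod

def boundaryPhase (S : Finset (Fin 7)) (f : Fin 7 → Fin 2) : ℂ :=
  ((bdryEdges S).map fun k => cexp ((π : ℂ) * I / 2 * edgeSpin k f)).prod

lemma Zh_mul_Zh (k : Fin 6) : Zh (nb k) * Zh (nb' k) = diagonal (edgeSpin k) := by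
  rw [Zh, Zh, PZ_eq_diagonal, localOp_diagonal, localOp_diagonal, diagonal_mul_diagonal]
  rfl

lemma iPow_diagonal (d : (Fin 7 → Fin 2) → ℂ) :
    iPow (diagonal d) = diagonal fun f => cexp ((π : ℂ) * I / 2 * d f) := by
  rw [iPow, ← diagonal_smul, exp_diagonal, Pi.exp_def, ← Complex.exp_eq_exp_ℂ]
  rfl

lemma partialFlip_eq (S : Finset (Fin 7)) :
    partialFlip S = flipMatrix (∑ j ∈ S, Pi.single j 1) := by
  have hL : ((List.finRange 7).filter fun j => j ∈ S).Nodup := (List.nodup_finRange 7).filter _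
  have hS : ((List.finRange 7).filter fun j => j ∈ S).toFinset = S := by ext; simp
  conv_rhs => rw [← hS, List.sum_toFinset _ hL]
  exact prod_map_localOp_PX _

lemma LGB_eq : LGB = -(Xh 0 * diagonal plaquettePhase) := by
  have hfactor (k : Fin 6) : (2 : ℂ)⁻¹ • ((1 : HexOp) - Zh (nb k) * Zh (nb' k)) =
      diagonal fun f => 2⁻¹ * (1 - edgeSpin k f) := by
    rw [Zh_mul_Zh, ← diagonal_one, diagonal_sub, ← diagonal_smul]
    rfl
  simp only [LGB, hfactor, iPow_diagonal, prod_map_diagonal]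
  rfl

lemma prod_map_iPow_Zh_mul_Zh (S : Finset (Fin 7)) :
    ((bdryEdges S).map fun k => iPow (Zh (nb k) * Zh (nb' k))).prod =
      diagonal (boundaryPhase S) := by
  simp only [Zh_mul_Zh, iPow_diagonal, prod_map_diagonal]
  rfl

lemma edgeSpin_add_flip (S : Finset (Fin 7)) (f : Fin 7 → Fin 2) (k : Fin 6) :
    edgeSpin k (f + ∑ j ∈ S, Pi.single j 1) =
      if k ∈ bdryEdges S then -edgeSpin k f else edgeSpin k f := by
  simp only [edgeSpin, spin_add_sum_single, bdryEdges, List.mem_filter, List.mem_finRange,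
    true_and]
  by_cases h : nb k ∈ S <;> by_cases h' : nb' k ∈ S <;> simp [h, h']

lemma plaquettePhase_add_flip (S : Finset (Fin 7)) (f : Fin 7 → Fin 2) :
    plaquettePhase (f + ∑ j ∈ S, Pi.single j 1) = plaquettePhase f * boundaryPhase S f := by
  have hedge (k : Fin 6) :
      cexp ((π : ℂ) * I / 2 * (2⁻¹ * (1 - edgeSpin k (f + ∑ j ∈ S, Pi.single j 1)))) =
        cexp ((π : ℂ) * I / 2 * (2⁻¹ * (1 - edgeSpin k f))) *
          if k ∈ bdryEdges S then cexp ((π : ℂ) * I / 2 * edgeSpin k f) else 1 := by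
    rw [edgeSpin_add_flip]
    split_ifs
    · rw [← Complex.exp_add]
      ring_nf
    · rw [mul_one]
  simp only [plaquettePhase, boundaryPhase, hedge, List.prod_map_mul, List.prod_map_ite]
  simp [bdryEdges]

/-- For any subset `S ⊆ {0,1,…,6}`, conjugating the Levin–Gu plaquette
operator by the partial spin-flip on `S` gives
`(∏_{j∈S} X_j) · B · (∏_{j∈S} X_j) = B · ∏_{k∈E_S} exp(iπ·Z_kZ_{k+1}/2)`, where `E_S` is the
set of boundary edges of the flipped region:  a spin-flip restricted to one side of a cut
decorates `B` by the product of the operators `i^{Z_kZ_{k+1}}` over the boundary edges. -/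
theorem levin_gu_plaquette_partial_flip (S : Finset (Fin 7)) :
    partialFlip S * LGB * partialFlip S =
      LGB * ((bdryEdges S).map fun k => iPow (Zh (nb k) * Zh (nb' k))).prod := by
  rw [partialFlip_eq, LGB_eq, prod_map_iPow_Zh_mul_Zh, mul_neg, neg_mul, Xh, localOp_PX,
    flipMatrix_mul_flipMatrix_mul_diagonal_mul_flipMatrix, neg_mul, mul_assoc,
    diagonal_mul_diagonal]
  simp only [plaquettePhase_add_flip]

end
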